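/- For each i ∈ {−,+}, assume hⁱ ≠ 0 and Dⁱ ≠ 0, where Dⁱ = b·g_y − (b²/(a+b))·hⁱ_y − b·hⁱ_z. Then there is a unique C² nontrivial return-time function Tⁱ_ε(x,z) defined on a neighborhood of (x₀, z₀, 0) (in the variables (x,z,ε)) with Tⁱ₀(x₀,z₀) = 0, such that H(Yⁱ(Tⁱ_ε(x,z), x, ζ(z), z, ε), Zⁱ(Tⁱ_ε(x,z), x, ζ(z), z, ε)) = 0 and Tⁱ_ε(x,z) is the nonzero root near t = 0 of this equation (obtained after factoring out the trivial root t = 0); moreover its first-order partial derivatives at (x₀, z₀, 0) are ∂ₓTⁱ = ᾱⁱ/hⁱ, ∂_zTⁱ = βⁱ = −2/hⁱ, and ∂_εTⁱ = γ̄ⁱ/hⁱ, where ᾱⁱ = −2(a+b)g_x/Dⁱ and γ̄ⁱ = −2[(a+b)(gⁱ)′(0) − b·hⁱ_ε]/Dⁱ. -/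

import Mathlib

open Filter Topology Asymptotics
open scoped ContDiff

noncomputable section

/-- The data of the piecewise-smooth system `ẋ = f(x,y)`, `ẏ = g(x,y) + gⁱ(ε)`,
`ż = hⁱ(y,z,ε)` with switching function `H(y,z) = (a+b)y − a − bz`, together with the
degenerate fold–fold point `(x₀,y₀,z₀)` on the switching plane. -/
structure SysData where
  a : ℝ
  b : ℝ
  f : ℝ → ℝ → ℝ
  g : ℝ → ℝ → ℝ
  gm : ℝ → ℝ
  gp : ℝ → ℝ
  hm : ℝ → ℝ → ℝ → ℝ
  hp : ℝ → ℝ → ℝ → ℝ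
  x₀ : ℝ
  y₀ : ℝ
  z₀ : ℝ
  hb : 0 < b
  hab : 0 < a + b
  smooth_f : ContDiff ℝ ∞ fun p : ℝ × ℝ => f p.1 p.2
  smooth_g : ContDiff ℝ ∞ fun p : ℝ × ℝ => g p.1 p.2
  smooth_gm : ContDiff ℝ ∞ gm
  smooth_gp : ContDiff ℝ ∞ gp
  smooth_hm : ContDiff ℝ ∞ fun p : ℝ × ℝ × ℝ => hm p.1 p.2.1 p.2.2
  smooth_hp : ContDiff ℝ ∞ fun p : ℝ × ℝ × ℝ => hp p.1 p.2.1 p.2.2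
  onL : (a + b) * y₀ - a - b * z₀ = 0
  border : f x₀ y₀ = 0
  foldm : (a + b) * (g x₀ y₀ + gm 0) - b * hm y₀ z₀ 0 = 0
  foldp : (a + b) * (g x₀ y₀ + gp 0) - b * hp y₀ z₀ 0 = 0

namespace SysData

variable (S : SysData)

/-- The switching function `H` on `ℝ³`. -/
def Hfun (p : ℝ × ℝ × ℝ) : ℝ := (S.a + S.b) * p.2.1 - S.a - S.b * p.2.2

/-- `ζ(z) = (a+bz)/(a+b)`, so that `(x, ζ(z), z)` lies on the switching plane. -/
def zeta (z : ℝ) : ℝ := (S.a + S.b * z) / (S.a + S.b)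

/-- `ζ'(0) = b/(a+b)`. -/
def zp0 : ℝ := S.b / (S.a + S.b)

def g0 : ℝ := S.g S.x₀ S.y₀
def gm0 : ℝ := S.gm 0
def gp0 : ℝ := S.gp 0
def hm0 : ℝ := S.hm S.y₀ S.z₀ 0
def hp0 : ℝ := S.hp S.y₀ S.z₀ 0

def fx : ℝ := deriv (fun x => S.f x S.y₀) S.x₀
def fy : ℝ := deriv (fun y => S.f S.x₀ y) S.y₀
def fyy : ℝ := iteratedDeriv 2 (fun y => S.f S.x₀ y) S.y₀
def gx : ℝ := deriv (fun x => S.g x S.y₀) S.x₀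
def gy : ℝ := deriv (fun y => S.g S.x₀ y) S.y₀
def gyy : ℝ := iteratedDeriv 2 (fun y => S.g S.x₀ y) S.y₀

def hmy : ℝ := deriv (fun y => S.hm y S.z₀ 0) S.y₀
def hmz : ℝ := deriv (fun z => S.hm S.y₀ z 0) S.z₀
def hme : ℝ := deriv (fun e => S.hm S.y₀ S.z₀ e) 0
def hmyy : ℝ := iteratedDeriv 2 (fun y => S.hm y S.z₀ 0) S.y₀
def hmzz : ℝ := iteratedDeriv 2 (fun z => S.hm S.y₀ z 0) S.z₀
def hmyz : ℝ := deriv (fun y => deriv (fun z => S.hm y z 0) S.z₀) S.y₀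
def hmzy : ℝ := deriv (fun z => deriv (fun y => S.hm y z 0) S.y₀) S.z₀

def hpy : ℝ := deriv (fun y => S.hp y S.z₀ 0) S.y₀
def hpz : ℝ := deriv (fun z => S.hp S.y₀ z 0) S.z₀
def hpe : ℝ := deriv (fun e => S.hp S.y₀ S.z₀ e) 0
def hpyy : ℝ := iteratedDeriv 2 (fun y => S.hp y S.z₀ 0) S.y₀
def hpzz : ℝ := iteratedDeriv 2 (fun z => S.hp S.y₀ z 0) S.z₀
def hpyz : ℝ := deriv (fun y => deriv (fun z => S.hp y z 0) S.z₀) S.y₀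
def hpzy : ℝ := deriv (fun z => deriv (fun y => S.hp y z 0) S.y₀) S.z₀

/-- `D⁻ = b·g_y − (b²/(a+b))·h⁻_y − b·h⁻_z`. -/
def Dm : ℝ := S.b * S.gy - S.b ^ 2 / (S.a + S.b) * S.hmy - S.b * S.hmz
/-- `D⁺ = b·g_y − (b²/(a+b))·h⁺_y − b·h⁺_z`. -/
def Dp : ℝ := S.b * S.gy - S.b ^ 2 / (S.a + S.b) * S.hpy - S.b * S.hpz

/-- `ᾱ⁻ = −2(a+b)g_x/D⁻`. -/
def albm : ℝ := -2 * ((S.a + S.b) * S.gx) / S.Dm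
def albp : ℝ := -2 * ((S.a + S.b) * S.gx) / S.Dp

/-- `γ̄⁻ = −2[(a+b)(g⁻)′(0) − b·h⁻_ε]/D⁻`. -/
def gbm : ℝ := -2 * ((S.a + S.b) * deriv S.gm 0 - S.b * S.hme) / S.Dm
def gbp : ℝ := -2 * ((S.a + S.b) * deriv S.gp 0 - S.b * S.hpe) / S.Dp

/-- `β⁻ = −2/h⁻`. -/
def betm : ℝ := -2 / S.hm0
def betp : ℝ := -2 / S.hp0

/-- `k̄̄⁻`. -/
def kbbm : ℝ :=
  (S.a + S.b) / 6 * (S.gx * S.fy + S.gyy * (S.g0 + S.gm0) + S.gy ^ 2)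
    - S.b / 6 * (S.hmyy + (S.a + S.b) / S.b * S.hmyz + (S.a + S.b) / S.b * S.hmzy
        + (S.a + S.b) ^ 2 / S.b ^ 2 * S.hmzz)
    - S.b / 6 * (S.hmy * S.gy + S.hmz * S.hmy + (S.a + S.b) / S.b * S.hmz ^ 2)
def kbbp : ℝ :=
  (S.a + S.b) / 6 * (S.gx * S.fy + S.gyy * (S.g0 + S.gp0) + S.gy ^ 2)
    - S.b / 6 * (S.hpyy + (S.a + S.b) / S.b * S.hpyz + (S.a + S.b) / S.b * S.hpzy
        + (S.a + S.b) ^ 2 / S.b ^ 2 * S.hpzz)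
    - S.b / 6 * (S.hpy * S.gy + S.hpz * S.hpy + (S.a + S.b) / S.b * S.hpz ^ 2)

/-- `k̃⁻`. -/
def ktilm : ℝ :=
  (S.a + S.b) / 2 * (S.gx * S.fy + S.gyy * (S.g0 + S.gm0) + S.gy ^ 2) * S.zp0
    - S.b / 2 * (S.hmyy + (S.a + S.b) / S.b * S.hmzy) * (S.g0 + S.gm0) * S.zp0
    - S.b / 2 * (S.hmy * S.gy + S.hmz * S.hmy) * S.zp0
    - S.b / 2 * (S.hmyz + (S.a + S.b) / S.b * S.hmzz) * (S.g0 + S.gm0)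
    - S.b / 2 * S.hmz ^ 2
def ktilp : ℝ :=
  (S.a + S.b) / 2 * (S.gx * S.fy + S.gyy * (S.g0 + S.gp0) + S.gy ^ 2) * S.zp0
    - S.b / 2 * (S.hpyy + (S.a + S.b) / S.b * S.hpzy) * (S.g0 + S.gp0) * S.zp0
    - S.b / 2 * (S.hpy * S.gy + S.hpz * S.hpy) * S.zp0
    - S.b / 2 * (S.hpyz + (S.a + S.b) / S.b * S.hpzz) * (S.g0 + S.gp0)
    - S.b / 2 * S.hpz ^ 2

/-- `k̂⁻`. -/
def khatm : ℝ :=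
  (S.a + S.b) / 2 * S.gyy * S.zp0 ^ 2
    - S.b * (1 / 2 * S.hmyy * S.zp0 ^ 2 + S.hmyz * S.zp0 + 1 / 2 * S.hmzz)
def khatp : ℝ :=
  (S.a + S.b) / 2 * S.gyy * S.zp0 ^ 2
    - S.b * (1 / 2 * S.hpyy * S.zp0 ^ 2 + S.hpyz * S.zp0 + 1 / 2 * S.hpzz)

/-- `η̄⁻`. -/
def etabm : ℝ :=
  -(4 / S.Dm) * (4 * S.b / (S.a + S.b) * S.kbbm / S.hm0 - 2 * S.ktilm / S.hm0 + S.khatm)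
def etabp : ℝ :=
  -(4 / S.Dp) * (4 * S.b / (S.a + S.b) * S.kbbp / S.hp0 - 2 * S.ktilp / S.hp0 + S.khatp)

/-- `A⁻ = f_x + ½f_y(g+g⁻₀)`. -/
def Am : ℝ := S.fx + 1 / 2 * S.fy * (S.g0 + S.gm0)
def Ap : ℝ := S.fx + 1 / 2 * S.fy * (S.g0 + S.gp0)

/-- `B⁻`. -/
def Bm : ℝ :=
  1 / 2 * S.fy * (S.b / (S.a + S.b)) * S.etabm
    + 4 * S.b / ((S.a + S.b) * S.hm0) *
        (1 / 6 * S.fx * S.gy + 1 / 6 * S.fyy * (S.g0 + S.gm0) + 1 / 6 * S.fy * S.gy)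
    - (S.fx * S.fy + S.fy * S.gy) * (S.b / ((S.a + S.b) * S.hm0))
    - 1 / 2 * S.fyy * S.b ^ 2 / (S.a + S.b) ^ 2
def Bp : ℝ :=
  1 / 2 * S.fy * (S.b / (S.a + S.b)) * S.etabp
    + 4 * S.b / ((S.a + S.b) * S.hp0) *
        (1 / 6 * S.fx * S.gy + 1 / 6 * S.fyy * (S.g0 + S.gp0) + 1 / 6 * S.fy * S.gy)
    - (S.fx * S.fy + S.fy * S.gy) * (S.b / ((S.a + S.b) * S.hp0))
    - 1 / 2 * S.fyy * S.b ^ 2 / (S.a + S.b) ^ 2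

/-- `C⁻ = ½f_y(b/(a+b))γ̄⁻`. -/
def Cm : ℝ := 1 / 2 * S.fy * (S.b / (S.a + S.b)) * S.gbm
def Cp : ℝ := 1 / 2 * S.fy * (S.b / (S.a + S.b)) * S.gbp

/-- `k = −(η̄⁻−η̄⁺)/(ᾱ⁻−ᾱ⁺)`. -/
def kcoef : ℝ := -(S.etabm - S.etabp) / (S.albm - S.albp)
/-- `m = −(γ̄⁻−γ̄⁺)/(ᾱ⁻−ᾱ⁺)`. -/
def mcoef : ℝ := -(S.gbm - S.gbp) / (S.albm - S.albp)

/-- `K = 2(kA⁺+B⁺)/h⁺ − 2(kA⁻+B⁻)/h⁻`. -/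
def Kc : ℝ := 2 * (S.kcoef * S.Ap + S.Bp) / S.hp0 - 2 * (S.kcoef * S.Am + S.Bm) / S.hm0
/-- `M = (mA⁻+C⁻)β⁻ − (mA⁺+C⁺)β⁺`. -/
def Mc : ℝ := (S.mcoef * S.Am + S.Cm) * S.betm - (S.mcoef * S.Ap + S.Cp) * S.betp

end SysData

/-- `(X,Y,Z)` is the (jointly smooth) general solution of the smooth subsystem
`ẋ = f(x,y)`, `ẏ = g(x,y) + gi(ε)`, `ż = hi(y,z,ε)` with initial condition
`(x̄,ȳ,z̄)` at `t = 0`. -/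
structure IsSol (S : SysData) (gi : ℝ → ℝ) (hi : ℝ → ℝ → ℝ → ℝ)
    (X Y Z : ℝ → ℝ → ℝ → ℝ → ℝ → ℝ) : Prop where
  init_x : ∀ x y z ε, X 0 x y z ε = x
  init_y : ∀ x y z ε, Y 0 x y z ε = y
  init_z : ∀ x y z ε, Z 0 x y z ε = z
  ode_x : ∀ t x y z ε,
    HasDerivAt (fun τ => X τ x y z ε) (S.f (X t x y z ε) (Y t x y z ε)) t
  ode_y : ∀ t x y z ε,
    HasDerivAt (fun τ => Y τ x y z ε) (S.g (X t x y z ε) (Y t x y z ε) + gi ε) t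
  ode_z : ∀ t x y z ε,
    HasDerivAt (fun τ => Z τ x y z ε) (hi (Y t x y z ε) (Z t x y z ε) ε) t
  smooth_X : ContDiff ℝ ∞ fun p : ℝ × ℝ × ℝ × ℝ × ℝ =>
    X p.1 p.2.1 p.2.2.1 p.2.2.2.1 p.2.2.2.2
  smooth_Y : ContDiff ℝ ∞ fun p : ℝ × ℝ × ℝ × ℝ × ℝ =>
    Y p.1 p.2.1 p.2.2.1 p.2.2.2.1 p.2.2.2.2
  smooth_Z : ContDiff ℝ ∞ fun p : ℝ × ℝ × ℝ × ℝ × ℝ =>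
    Z p.1 p.2.1 p.2.2.1 p.2.2.2.1 p.2.2.2.2

/-- `u(t,x,z,ε) = H(Y(t,x,ζ(z),z,ε), Z(t,x,ζ(z),z,ε))`. -/
def uFun (S : SysData) (Y Z : ℝ → ℝ → ℝ → ℝ → ℝ → ℝ) (t x z ε : ℝ) : ℝ :=
  (S.a + S.b) * Y t x (S.zeta z) z ε - S.a - S.b * Z t x (S.zeta z) z ε

/-- `v(t,x,z,ε) = ∫₀¹ ∂ₜu(σt,x,z,ε) dσ`, so that `u = t·v`; the nonzero root of `u(·,x,z,ε)`
near `0` is the root of `v(·,x,z,ε)`. -/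
def vFun (S : SysData) (Y Z : ℝ → ℝ → ℝ → ℝ → ℝ → ℝ) (t x z ε : ℝ) : ℝ :=
  ∫ σ in (0:ℝ)..1, deriv (fun τ => uFun S Y Z τ x z ε) (σ * t)

/-- `T` is the `C²` nontrivial return-time function: `T(x₀,z₀,0) = 0`, the point
`(X,Y,Z)(T(x,z,ε),x,ζ(z),z,ε)` lies on `L`, and `T(x,z,ε)` is the unique root near `0` of the
function `v` obtained from `u = H∘(Y,Z)` after factoring out the trivial root `t = 0`. -/
structure IsReturnTime (S : SysData) (Y Z : ℝ → ℝ → ℝ → ℝ → ℝ → ℝ)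
    (T : ℝ → ℝ → ℝ → ℝ) : Prop where
  base : T S.x₀ S.z₀ 0 = 0
  smooth : ∃ U ∈ 𝓝 ((S.x₀, S.z₀, (0:ℝ)) : ℝ × ℝ × ℝ),
    ContDiffOn ℝ 2 (fun p : ℝ × ℝ × ℝ => T p.1 p.2.1 p.2.2) U
  root : ∃ δ > (0:ℝ), ∃ U ∈ 𝓝 ((S.x₀, S.z₀, (0:ℝ)) : ℝ × ℝ × ℝ), ∀ p ∈ U,
    uFun S Y Z (T p.1 p.2.1 p.2.2) p.1 p.2.1 p.2.2 = 0 ∧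
    vFun S Y Z (T p.1 p.2.1 p.2.2) p.1 p.2.1 p.2.2 = 0 ∧
    |T p.1 p.2.1 p.2.2| < δ ∧
    ∀ t : ℝ, |t| < δ → vFun S Y Z t p.1 p.2.1 p.2.2 = 0 → t = T p.1 p.2.1 p.2.2

/-- The half-Poincaré map `(x,z) ↦ (X,Z)(T(x,z,ε), x, ζ(z), z, ε)` of the switching plane,
in the coordinates `(x,z)`. -/
def halfP (S : SysData) (X Z : ℝ → ℝ → ℝ → ℝ → ℝ → ℝ) (T : ℝ → ℝ → ℝ → ℝ)
    (ε : ℝ) (p : ℝ × ℝ) : ℝ × ℝ :=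
  (X (T p.1 p.2 ε) p.1 (S.zeta p.2) p.2 ε, Z (T p.1 p.2 ε) p.1 (S.zeta p.2) p.2 ε)

/-- The flow map of a subsystem on `ℝ³`. -/
def flow3 (X Y Z : ℝ → ℝ → ℝ → ℝ → ℝ → ℝ) (ε t : ℝ) (p : ℝ × ℝ × ℝ) : ℝ × ℝ × ℝ :=
  (X t p.1 p.2.1 p.2.2 ε, Y t p.1 p.2.1 p.2.2 ε, Z t p.1 p.2.1 p.2.2 ε)

/-- The conclusion of STATEMENT 3 for one subsystem: existence and uniqueness of the `C²`
nontrivial return-time function, together with its first-order partial derivatives at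
`(x₀, z₀, 0)`: `∂ₓT = ᾱ/h`, `∂_zT = β = −2/h`, `∂_εT = γ̄/h`. -/
def ReturnTimeConcl (S : SysData) (Y Z : ℝ → ℝ → ℝ → ℝ → ℝ → ℝ) (h0 alb gb : ℝ) : Prop :=
  ∃ δ > (0:ℝ), ∃ U ∈ 𝓝 ((S.x₀, S.z₀, (0:ℝ)) : ℝ × ℝ × ℝ), ∃ T : ℝ → ℝ → ℝ → ℝ,
    ContDiffOn ℝ 2 (fun p : ℝ × ℝ × ℝ => T p.1 p.2.1 p.2.2) U ∧
    T S.x₀ S.z₀ 0 = 0 ∧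
    (∀ p ∈ U,
      uFun S Y Z (T p.1 p.2.1 p.2.2) p.1 p.2.1 p.2.2 = 0 ∧
      vFun S Y Z (T p.1 p.2.1 p.2.2) p.1 p.2.1 p.2.2 = 0 ∧
      |T p.1 p.2.1 p.2.2| < δ ∧
      (∀ t : ℝ, |t| < δ → vFun S Y Z t p.1 p.2.1 p.2.2 = 0 → t = T p.1 p.2.1 p.2.2)) ∧
    (∀ T' : ℝ → ℝ → ℝ → ℝ,
      (∀ p ∈ U, |T' p.1 p.2.1 p.2.2| < δ ∧
        vFun S Y Z (T' p.1 p.2.1 p.2.2) p.1 p.2.1 p.2.2 = 0) →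
      ∀ p ∈ U, T' p.1 p.2.1 p.2.2 = T p.1 p.2.1 p.2.2) ∧
    deriv (fun x => T x S.z₀ 0) S.x₀ = alb / h0 ∧
    deriv (fun z => T S.x₀ z 0) S.z₀ = -2 / h0 ∧
    deriv (fun e => T S.x₀ S.z₀ e) 0 = gb / h0

/-! Since `(x, ζ(z), z)` lies on the switching plane, `u(t) = H(Y, Z)(t, x, ζ(z), z, ε)` vanishes
at `t = 0`, so `u = t · v` with `v(t) = ∫₀¹ u'(σt) dσ` smooth in all variables. At the base
point `v(0) = u'(0)` vanishes by the fold condition, and by the border-collision and fold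
conditions `∂ₜv = u''(0)/2 = Dⁱhⁱ/2 ≠ 0`. The implicit function theorem gives the `C²` root `T`
of `v`, unique near `t = 0`, and implicit differentiation `∂T = -∂v / ∂ₜv` at the base point,
with `∂ₓv = (a+b) g_x`, `∂_z v = Dⁱ`, `∂_ε v = (a+b)(gⁱ)'(0) - b hⁱ_ε`, gives the formulas. -/

section ParametricIntegral

variable {X F : Type*} [NormedAddCommGroup X] [NormedSpace ℝ X] [FiniteDimensional ℝ X]
  [NormedAddCommGroup F] [NormedSpace ℝ F]

theorem hasFDerivAt_intervalIntegral_of_contDiff {G : X × ℝ → F} (hG : ContDiff ℝ 1 G)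
    (a b : ℝ) (x₀ : X) :
    HasFDerivAt (fun x => ∫ σ in a..b, G (x, σ))
      (∫ σ in a..b, fderiv ℝ G (x₀, σ) ∘L .inl ℝ X ℝ) x₀ := by
  -- without this, instance search for measurability times out on the side of `X →L[ℝ] F`
  have := secondCountableTopologyEither_of_left ℝ (X →L[ℝ] F)
  have hG' : Continuous (fderiv ℝ G) := hG.continuous_fderiv one_ne_zero
  obtain ⟨C, hC⟩ : ∃ C, ∀ p ∈ Metric.closedBall x₀ 1 ×ˢ Set.uIcc a b, ‖fderiv ℝ G p‖ ≤ C :=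
    ((isCompact_closedBall x₀ 1).prod isCompact_uIcc).exists_bound_of_continuousOn
      hG'.continuousOn
  refine intervalIntegral.hasFDerivAt_integral_of_dominated_of_fderiv_le
    (F' := fun x σ => fderiv ℝ G (x, σ) ∘L .inl ℝ X ℝ)
    (bound := fun _ => C * ‖ContinuousLinearMap.inl ℝ X ℝ‖) (Metric.ball_mem_nhds x₀ one_pos)
    (.of_forall fun x => (hG.continuous.comp (by fun_prop)).aestronglyMeasurable)
    ((hG.continuous.comp (by fun_prop)).intervalIntegrable _ _)
    ((hG'.comp (by fun_prop)).clm_comp_const _).aestronglyMeasurable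
    (.of_forall fun σ hσ x hx => (ContinuousLinearMap.opNorm_comp_le _ _).trans
      (mul_le_mul_of_nonneg_right
        (hC _ ⟨Metric.ball_subset_closedBall hx, Set.uIoc_subset_uIcc hσ⟩) (norm_nonneg _)))
    intervalIntegrable_const
    (.of_forall fun σ _ x _ =>
      (hG.differentiable one_ne_zero (x, σ)).hasFDerivAt.comp x (hasFDerivAt_prodMk_left x σ))

theorem contDiff_intervalIntegral_of_contDiff {n : ℕ} {G : X × ℝ → F} (hG : ContDiff ℝ n G)
    (a b : ℝ) : ContDiff ℝ n (fun x => ∫ σ in a..b, G (x, σ)) := by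
  induction n generalizing F with
  | zero =>
    simpa using intervalIntegral.continuous_parametric_intervalIntegral_of_continuous'
      (f := fun x σ => G (x, σ)) hG.continuous a b
  | succ n ih =>
    have hG1 : ContDiff ℝ 1 G := hG.of_le (by exact_mod_cast Nat.le_add_left 1 n)
    have hderiv := hasFDerivAt_intervalIntegral_of_contDiff hG1 a b
    rw [Nat.cast_succ, contDiff_succ_iff_fderiv_apply]
    refine ⟨fun x => (hderiv x).differentiableAt, by simp, fun y => ?_⟩
    have hfd : (fun x => fderiv ℝ (fun x => ∫ σ in a..b, G (x, σ)) x y)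
        = fun x => ∫ σ in a..b, fderiv ℝ G (x, σ) (y, 0) := by
      funext x
      rw [(hderiv x).fderiv, ContinuousLinearMap.intervalIntegral_apply
        (((hG1.continuous_fderiv one_ne_zero).comp (by fun_prop)).clm_comp_const _
          |>.intervalIntegrable _ _)]
      rfl
    rw [hfd]
    exact ih ((hG.fderiv_right (m := n) (by push_cast; rfl)).clm_apply contDiff_const)

theorem contDiff_integral_deriv_mul {U : X → ℝ → F} {n : ℕ}
    (hU : ContDiff ℝ (n + 1) (fun p : X × ℝ => U p.1 p.2)) :
    ContDiff ℝ n (fun p : X × ℝ => ∫ σ in (0:ℝ)..1, deriv (U p.1) (σ * p.2)) :=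
  contDiff_intervalIntegral_of_contDiff
    (G := fun w : (X × ℝ) × ℝ => deriv (U w.1.1) (w.2 * w.1.2))
    ((ContDiff.fderiv (f := fun (w : (X × ℝ) × ℝ) τ => U w.1.1 τ)
      (hU.comp (f := fun p : ((X × ℝ) × ℝ) × ℝ => (p.1.1.1, p.2)) (by fun_prop))
      (g := fun w : (X × ℝ) × ℝ => w.2 * w.1.2) (by fun_prop) le_rfl).clm_apply contDiff_const) 0 1

end ParametricIntegral

theorem sub_eq_smul_integral_deriv_mul {E : Type*} [NormedAddCommGroup E] [NormedSpace ℝ E]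
    [CompleteSpace E] {φ : ℝ → E} (hφ : ContDiff ℝ 1 φ) (t : ℝ) :
    φ t - φ 0 = t • ∫ σ in (0:ℝ)..1, deriv φ (σ * t) := by
  rcases eq_or_ne t 0 with rfl | ht
  · simp
  rw [intervalIntegral.integral_comp_mul_right _ ht, zero_mul, one_mul, smul_inv_smul₀ ht,
    intervalIntegral.integral_deriv_eq_sub (fun x _ => hφ.differentiable one_ne_zero x)
      ((hφ.continuous_deriv le_rfl).intervalIntegrable _ _)]

theorem hasDerivAt_half_of_eq_add_mul {φ d : ℝ → ℝ} {c : ℝ} (hd : Differentiable ℝ d)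
    (hd' : DifferentiableAt ℝ (deriv d) 0) (hφ : ∀ t, φ t = φ 0 + t * d t)
    (hc : HasDerivAt (deriv φ) c 0) : HasDerivAt d (c / 2) 0 := by
  have hφ' : deriv φ = fun t => 1 * d t + t * deriv d t := by
    funext t
    rw [funext hφ]
    exact (((hasDerivAt_id t).mul (hd t).hasDerivAt).const_add (φ 0)).deriv
  rw [hφ'] at hc
  have h2 := hc.unique (((hd 0).hasDerivAt.const_mul 1).add ((hasDerivAt_id 0).mul hd'.hasDerivAt))
  simp only [one_mul, zero_mul, add_zero] at h2
  have hc2 : c / 2 = deriv d 0 := by linarith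
  exact hc2 ▸ (hd 0).hasDerivAt

theorem hasDerivAt_comp₂_of_differentiableAt {F : ℝ → ℝ → ℝ} {γ₁ γ₂ : ℝ → ℝ} {a b s : ℝ}
    (hF : DifferentiableAt ℝ (fun p : ℝ × ℝ => F p.1 p.2) (γ₁ s, γ₂ s))
    (h₁ : HasDerivAt γ₁ a s) (h₂ : HasDerivAt γ₂ b s) :
    HasDerivAt (fun t => F (γ₁ t) (γ₂ t))
      (a * deriv (fun x => F x (γ₂ s)) (γ₁ s) + b * deriv (fun y => F (γ₁ s) y) (γ₂ s)) s := by
  set L := fderiv ℝ (fun p : ℝ × ℝ => F p.1 p.2) (γ₁ s, γ₂ s)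
  have hx : HasDerivAt (fun x => F x (γ₂ s)) (L (1, 0)) (γ₁ s) :=
    hF.hasFDerivAt.comp_hasDerivAt (f := fun x => (x, γ₂ s)) _
      ((hasDerivAt_id _).prodMk (hasDerivAt_const _ _))
  have hy : HasDerivAt (fun y => F (γ₁ s) y) (L (0, 1)) (γ₂ s) :=
    hF.hasFDerivAt.comp_hasDerivAt (f := fun y => (γ₁ s, y)) _
      ((hasDerivAt_const _ _).prodMk (hasDerivAt_id _))
  have hab : L (a, b) = a * L (1, 0) + b * L (0, 1) := by
    rw [← smul_eq_mul, ← smul_eq_mul, ← map_smul, ← map_smul, ← map_add]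
    simp
  rw [hx.deriv, hy.deriv, ← hab]
  exact hF.hasFDerivAt.comp_hasDerivAt s (h₁.prodMk h₂)

theorem ContinuousLinearMap.isInvertible_of_apply_one_ne_zero {f : ℝ →L[ℝ] ℝ} (hf : f 1 ≠ 0) :
    f.IsInvertible :=
  .of_inverse (g := (f 1)⁻¹ • .id ℝ ℝ) (by ext; simp [hf]) (by ext; simp [hf])

theorem exists_implicit_root {E : Type*} [NormedAddCommGroup E] [NormedSpace ℝ E]
    [CompleteSpace E] {f : E × ℝ → ℝ} {q₀ : E} {c : ℝ} {n : ℕ} (hn : n ≠ 0)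
    (hf : ContDiffAt ℝ n f (q₀, 0)) (hf0 : f (q₀, 0) = 0)
    (hc : HasDerivAt (fun t => f (q₀, t)) c 0) (hc0 : c ≠ 0) :
    ∃ T : E → ℝ, T q₀ = 0 ∧ ∃ δ > 0, ∃ U ∈ 𝓝 q₀, ContDiffOn ℝ n T U ∧
      ∀ q ∈ U, |T q| < δ ∧ f (q, T q) = 0 ∧ ∀ t, |t| < δ → f (q, t) = 0 → t = T q := by
  have hn' : (n : WithTop ℕ∞) ≠ 0 := by exact_mod_cast hn
  have hinv : (fderiv ℝ f (q₀, 0) ∘L .inr ℝ E ℝ).IsInvertible := by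
    have hL : (fderiv ℝ f (q₀, 0) ∘L .inr ℝ E ℝ) 1 = c :=
      (hc.unique ((hf.differentiableAt hn').hasFDerivAt.comp_hasDerivAt 0
        ((hasDerivAt_const _ _).prodMk (hasDerivAt_id 0)))).symm
    exact ContinuousLinearMap.isInvertible_of_apply_one_ne_zero (hL ▸ hc0)
  set T := hf.implicitFunction hn' hinv
  have hT0 : T q₀ = 0 := hf.implicitFunction_apply_self hn' hinv
  have hT : ContDiffAt ℝ n T q₀ := hf.contDiffAt_implicitFunction hn' hinv
  obtain ⟨V, hV, hTV⟩ := hT.contDiffOn le_rfl (by simp)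
  obtain ⟨δ, hδ, hiff⟩ :=
    Metric.eventually_nhds_iff.mp (hf.eventually_apply_eq_iff_implicitFunction hn' hinv)
  have hroot : ∀ q t, dist q q₀ < δ → |t| < δ → (f (q, t) = 0 ↔ T q = t) := by
    intro q t hq ht
    rw [← hf0]
    exact hiff (y := (q, t)) (by simpa [Prod.dist_eq, Real.dist_eq] using ⟨hq, ht⟩)
  refine ⟨T, hT0, δ, hδ, V ∩ Metric.ball q₀ δ ∩ T ⁻¹' Metric.ball 0 δ,
    Filter.inter_mem (Filter.inter_mem hV (Metric.ball_mem_nhds _ hδ))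
      (hT.continuousAt.preimage_mem_nhds (by rw [hT0]; exact Metric.ball_mem_nhds _ hδ)),
    hTV.mono fun _ hq => hq.1.1, ?_⟩
  rintro q ⟨⟨-, hq⟩, hTq⟩
  have hTq' : |T q| < δ := by simpa [Real.dist_eq] using hTq
  exact ⟨hTq', (hroot q (T q) hq hTq').2 rfl, fun t ht h => ((hroot q t hq ht).1 h).symm⟩

theorem deriv_comp_eq_of_implicit {E : Type*} [NormedAddCommGroup E] [NormedSpace ℝ E]
    {f : E × ℝ → ℝ} {T : E → ℝ} {γ : ℝ → E} {q₀ e : E} {s₀ t₀ c d : ℝ}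
    (hf : DifferentiableAt ℝ f (q₀, t₀)) (hT : DifferentiableAt ℝ T q₀) (hT0 : T q₀ = t₀)
    (hγ : HasDerivAt γ e s₀) (hγ0 : γ s₀ = q₀) (hroot : ∀ᶠ q in 𝓝 q₀, f (q, T q) = 0)
    (hd : HasDerivAt (fun s => f (γ s, t₀)) d s₀) (hc : HasDerivAt (fun t => f (q₀, t)) c t₀)
    (hc0 : c ≠ 0) :
    deriv (fun s => T (γ s)) s₀ = -d / c := by
  subst hγ0 hT0
  set L := fderiv ℝ f (γ s₀, T (γ s₀))
  set T' := fderiv ℝ T (γ s₀)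
  have hTγ : HasDerivAt (fun s => T (γ s)) (T' e) s₀ := hT.hasFDerivAt.comp_hasDerivAt s₀ hγ
  have hL : L (e, T' e) = 0 :=
    (hf.hasFDerivAt.comp_hasDerivAt s₀ (hγ.prodMk hTγ)).unique
      ((hasDerivAt_const s₀ (0:ℝ)).congr_of_eventuallyEq (hγ.continuousAt.eventually hroot))
  have hdL : d = L (e, 0) :=
    hd.unique (hf.hasFDerivAt.comp_hasDerivAt s₀ (hγ.prodMk (hasDerivAt_const _ _)))
  have hcL : c = L (0, 1) :=
    hc.unique (hf.hasFDerivAt.comp_hasDerivAt _ ((hasDerivAt_const _ _).prodMk (hasDerivAt_id _)))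
  have hsplit : L (e, T' e) = L (e, 0) + T' e * L (0, 1) := by
    rw [← smul_eq_mul, ← map_smul, ← map_add]
    simp
  rw [hTγ.deriv, eq_div_iff hc0, hdL, hcL]
  linarith

namespace SysData

variable (S : SysData)

/-- `Dⁱ` for the subsystem with `ż = hi(y,z,ε)`: `S.Dm = S.dCoeff S.hm`, `S.Dp = S.dCoeff S.hp`. -/
def dCoeff (hi : ℝ → ℝ → ℝ → ℝ) : ℝ :=
  S.b * S.gy - S.b ^ 2 / (S.a + S.b) * deriv (fun y => hi y S.z₀ 0) S.y₀
    - S.b * deriv (fun z => hi S.y₀ z 0) S.z₀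

theorem zeta_z₀ : S.zeta S.z₀ = S.y₀ := by
  rw [zeta, div_eq_iff S.hab.ne']
  linarith [S.onL]

theorem hasDerivAt_zeta (z : ℝ) : HasDerivAt S.zeta S.zp0 z := by
  unfold zeta zp0
  simpa using (((hasDerivAt_id z).const_mul S.b).const_add S.a).div_const (S.a + S.b)

theorem differentiable_g : Differentiable ℝ fun p : ℝ × ℝ => S.g p.1 p.2 :=
  S.smooth_g.differentiable (by simp)

theorem hasDerivAt_gx : HasDerivAt (fun x => S.g x S.y₀) S.gx S.x₀ :=
  ((S.differentiable_g.comp (differentiable_id.prodMk (differentiable_const _))) _).hasDerivAt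

theorem hasDerivAt_gy : HasDerivAt (fun y => S.g S.x₀ y) S.gy S.y₀ :=
  ((S.differentiable_g.comp ((differentiable_const _).prodMk differentiable_id)) _).hasDerivAt

end SysData

namespace IsSol

variable {S : SysData} {gi : ℝ → ℝ} {hi : ℝ → ℝ → ℝ → ℝ} {X Y Z : ℝ → ℝ → ℝ → ℝ → ℝ → ℝ}

theorem contDiff_uFun (hSol : IsSol S gi hi X Y Z) :
    ContDiff ℝ ∞ fun p : (ℝ × ℝ × ℝ) × ℝ => uFun S Y Z p.2 p.1.1 p.1.2.1 p.1.2.2 := by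
  have hζ : ContDiff ℝ ∞ S.zeta := by unfold SysData.zeta; fun_prop
  have hin : ContDiff ℝ ∞ fun p : (ℝ × ℝ × ℝ) × ℝ =>
      (p.2, p.1.1, S.zeta p.1.2.1, p.1.2.1, p.1.2.2) := by fun_prop
  exact ((contDiff_const.mul (hSol.smooth_Y.comp hin)).sub contDiff_const).sub
    (contDiff_const.mul (hSol.smooth_Z.comp hin))

theorem uFun_zero (hSol : IsSol S gi hi X Y Z) (x z ε : ℝ) : uFun S Y Z 0 x z ε = 0 := by
  rw [uFun, hSol.init_y, hSol.init_z, SysData.zeta]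
  field_simp [S.hab.ne']
  ring

theorem hasDerivAt_uFun (hSol : IsSol S gi hi X Y Z) (t x z ε : ℝ) :
    HasDerivAt (fun τ => uFun S Y Z τ x z ε)
      ((S.a + S.b) * (S.g (X t x (S.zeta z) z ε) (Y t x (S.zeta z) z ε) + gi ε)
        - S.b * hi (Y t x (S.zeta z) z ε) (Z t x (S.zeta z) z ε) ε) t :=
  (((hSol.ode_y t _ _ _ _).const_mul _).sub_const _).sub ((hSol.ode_z t _ _ _ _).const_mul _)

theorem uFun_eq_mul_vFun (hSol : IsSol S gi hi X Y Z) (t x z ε : ℝ) :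
    uFun S Y Z t x z ε = t * vFun S Y Z t x z ε := by
  have hslice : ContDiff ℝ 1 fun τ => uFun S Y Z τ x z ε := by
    refine (hSol.contDiff_uFun.comp
      ((contDiff_const (c := ((x, z, ε) : ℝ × ℝ × ℝ))).prodMk contDiff_id)).of_le ?_
    exact_mod_cast le_top
  have h := sub_eq_smul_integral_deriv_mul hslice t
  beta_reduce at h
  rwa [hSol.uFun_zero, sub_zero, smul_eq_mul] at h

theorem contDiff_vFun (hSol : IsSol S gi hi X Y Z) (n : ℕ) :
    ContDiff ℝ n fun p : (ℝ × ℝ × ℝ) × ℝ => vFun S Y Z p.2 p.1.1 p.1.2.1 p.1.2.2 :=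
  contDiff_integral_deriv_mul (U := fun (q : ℝ × ℝ × ℝ) τ => uFun S Y Z τ q.1 q.2.1 q.2.2)
    (n := n) (hSol.contDiff_uFun.of_le (by exact_mod_cast le_top))

theorem vFun_zero (hSol : IsSol S gi hi X Y Z) (x z ε : ℝ) :
    vFun S Y Z 0 x z ε = (S.a + S.b) * (S.g x (S.zeta z) + gi ε) - S.b * hi (S.zeta z) z ε := by
  simp only [vFun, mul_zero, intervalIntegral.integral_const, sub_zero, one_smul]
  rw [(hSol.hasDerivAt_uFun 0 x z ε).deriv, hSol.init_x, hSol.init_y, hSol.init_z]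

theorem hasDerivAt_deriv_uFun_base (hSol : IsSol S gi hi X Y Z)
    (hhi : ContDiff ℝ ∞ fun p : ℝ × ℝ × ℝ => hi p.1 p.2.1 p.2.2)
    (hfold : (S.a + S.b) * (S.g S.x₀ S.y₀ + gi 0) - S.b * hi S.y₀ S.z₀ 0 = 0) :
    HasDerivAt (deriv fun τ => uFun S Y Z τ S.x₀ S.z₀ 0) (S.dCoeff hi * hi S.y₀ S.z₀ 0) 0 := by
  have hu' : (deriv fun τ => uFun S Y Z τ S.x₀ S.z₀ 0) = fun t =>
      (S.a + S.b) * (S.g (X t S.x₀ S.y₀ S.z₀ 0) (Y t S.x₀ S.y₀ S.z₀ 0) + gi 0)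
        - S.b * hi (Y t S.x₀ S.y₀ S.z₀ 0) (Z t S.x₀ S.y₀ S.z₀ 0) 0 := by
    funext t
    rw [(hSol.hasDerivAt_uFun t _ _ _).deriv, S.zeta_z₀]
  have hx := hSol.ode_x 0 S.x₀ S.y₀ S.z₀ 0
  have hy := hSol.ode_y 0 S.x₀ S.y₀ S.z₀ 0
  have hz := hSol.ode_z 0 S.x₀ S.y₀ S.z₀ 0
  simp only [hSol.init_x, hSol.init_y, hSol.init_z, S.border] at hx hy hz
  have hg := hasDerivAt_comp₂_of_differentiableAt (S.differentiable_g _) hx hy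
  have hh := hasDerivAt_comp₂_of_differentiableAt (F := fun y z => hi y z 0)
    ((hhi.comp (contDiff_fst.prodMk (contDiff_snd.prodMk contDiff_const))).differentiable
      (by simp) _) hy hz
  simp only [hSol.init_x, hSol.init_y, hSol.init_z] at hg hh
  rw [hu']
  refine (((hg.add_const (gi 0)).const_mul (S.a + S.b)).sub (hh.const_mul S.b)).congr_deriv ?_
  -- the border-collision condition has killed the `g_x` term; the fold condition does the rest
  have hG : S.g S.x₀ S.y₀ + gi 0 = S.b * hi S.y₀ S.z₀ 0 / (S.a + S.b) := by
    rw [eq_div_iff S.hab.ne']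
    linarith
  have hab := S.hab.ne'
  rw [SysData.dCoeff, SysData.gy, hG]
  field_simp
  ring

theorem hasDerivAt_vFun_base (hSol : IsSol S gi hi X Y Z)
    (hhi : ContDiff ℝ ∞ fun p : ℝ × ℝ × ℝ => hi p.1 p.2.1 p.2.2)
    (hfold : (S.a + S.b) * (S.g S.x₀ S.y₀ + gi 0) - S.b * hi S.y₀ S.z₀ 0 = 0) :
    HasDerivAt (fun t => vFun S Y Z t S.x₀ S.z₀ 0) (S.dCoeff hi * hi S.y₀ S.z₀ 0 / 2) 0 := by
  have hslice : ContDiff ℝ 2 fun t => vFun S Y Z t S.x₀ S.z₀ 0 :=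
    (hSol.contDiff_vFun 2).comp
      ((contDiff_const (c := ((S.x₀, S.z₀, 0) : ℝ × ℝ × ℝ))).prodMk contDiff_id)
  refine hasDerivAt_half_of_eq_add_mul (hslice.differentiable two_ne_zero) ?_
    (fun t => by rw [hSol.uFun_zero, zero_add, hSol.uFun_eq_mul_vFun])
    (hSol.hasDerivAt_deriv_uFun_base hhi hfold)
  simpa using hslice.differentiable_iteratedDeriv 1 (by norm_num) 0

theorem hasDerivAt_vFun_zero_x (hSol : IsSol S gi hi X Y Z) :
    HasDerivAt (fun x => vFun S Y Z 0 x S.z₀ 0) ((S.a + S.b) * S.gx) S.x₀ := by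
  simp only [hSol.vFun_zero, S.zeta_z₀]
  simpa using (S.hasDerivAt_gx.add_const (gi 0)).const_mul (S.a + S.b)

theorem hasDerivAt_vFun_zero_z (hSol : IsSol S gi hi X Y Z)
    (hhi : ContDiff ℝ ∞ fun p : ℝ × ℝ × ℝ => hi p.1 p.2.1 p.2.2) :
    HasDerivAt (fun z => vFun S Y Z 0 S.x₀ z 0) (S.dCoeff hi) S.z₀ := by
  simp only [hSol.vFun_zero]
  have hg : HasDerivAt (fun z => S.g S.x₀ (S.zeta z)) (S.gy * S.zp0) S.z₀ :=
    (S.zeta_z₀ ▸ S.hasDerivAt_gy).comp S.z₀ (S.hasDerivAt_zeta S.z₀)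
  have hh := hasDerivAt_comp₂_of_differentiableAt (F := fun y z => hi y z 0)
    ((hhi.comp (contDiff_fst.prodMk (contDiff_snd.prodMk contDiff_const))).differentiable
      (by simp) _) (S.hasDerivAt_zeta S.z₀) (hasDerivAt_id' S.z₀)
  rw [S.zeta_z₀] at hh
  refine (((hg.add_const (gi 0)).const_mul (S.a + S.b)).sub (hh.const_mul S.b)).congr_deriv ?_
  have hab := S.hab.ne'
  rw [SysData.dCoeff, SysData.zp0]
  field_simp
  ring

theorem hasDerivAt_vFun_zero_ε (hSol : IsSol S gi hi X Y Z) (hgi : ContDiff ℝ ∞ gi)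
    (hhi : ContDiff ℝ ∞ fun p : ℝ × ℝ × ℝ => hi p.1 p.2.1 p.2.2) :
    HasDerivAt (fun e => vFun S Y Z 0 S.x₀ S.z₀ e)
      ((S.a + S.b) * deriv gi 0 - S.b * deriv (fun e => hi S.y₀ S.z₀ e) 0) 0 := by
  simp only [hSol.vFun_zero, S.zeta_z₀]
  have hh : DifferentiableAt ℝ (fun e => hi S.y₀ S.z₀ e) 0 :=
    (hhi.comp (contDiff_const.prodMk (contDiff_const.prodMk contDiff_id))).differentiable
      (by simp) _
  exact (((hgi.differentiable (by simp) 0).hasDerivAt.const_add _).const_mul _).sub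
    (hh.hasDerivAt.const_mul _)

theorem returnTimeConcl (hSol : IsSol S gi hi X Y Z) (hgi : ContDiff ℝ ∞ gi)
    (hhi : ContDiff ℝ ∞ fun p : ℝ × ℝ × ℝ => hi p.1 p.2.1 p.2.2)
    (hfold : (S.a + S.b) * (S.g S.x₀ S.y₀ + gi 0) - S.b * hi S.y₀ S.z₀ 0 = 0)
    (hh : hi S.y₀ S.z₀ 0 ≠ 0) (hD : S.dCoeff hi ≠ 0) :
    ReturnTimeConcl S Y Z (hi S.y₀ S.z₀ 0) (-2 * ((S.a + S.b) * S.gx) / S.dCoeff hi)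
      (-2 * ((S.a + S.b) * deriv gi 0 - S.b * deriv (fun e => hi S.y₀ S.z₀ e) 0)
        / S.dCoeff hi) := by
  set f : (ℝ × ℝ × ℝ) × ℝ → ℝ := fun p => vFun S Y Z p.2 p.1.1 p.1.2.1 p.1.2.2
  have hc := hSol.hasDerivAt_vFun_base hhi hfold
  have hc0 : S.dCoeff hi * hi S.y₀ S.z₀ 0 / 2 ≠ 0 := by positivity
  have hf0 : f ((S.x₀, S.z₀, 0), 0) = 0 := by
    simpa only [f, hSol.vFun_zero, S.zeta_z₀] using hfold
  obtain ⟨T, hT0, δ, hδ, U, hU, hTU, hroot⟩ :=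
    exists_implicit_root two_ne_zero (hSol.contDiff_vFun 2).contDiffAt hf0 hc hc0
  have hf : DifferentiableAt ℝ f ((S.x₀, S.z₀, 0), 0) :=
    (hSol.contDiff_vFun 1).differentiable one_ne_zero _
  have hT : DifferentiableAt ℝ T (S.x₀, S.z₀, 0) :=
    (hTU.contDiffAt hU).differentiableAt two_ne_zero
  have hroot' : ∀ᶠ q in 𝓝 (S.x₀, S.z₀, 0), f (q, T q) = 0 :=
    Filter.mem_of_superset hU fun q hq => (hroot q hq).2.1
  refine ⟨δ, hδ, U, hU, fun x z e => T (x, z, e), hTU, hT0, fun p hp => ?_,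
    fun T' hT' p hp => (hroot p hp).2.2 _ (hT' p hp).1 (hT' p hp).2, ?_, ?_, ?_⟩
  · obtain ⟨hlt, hzero, huniq⟩ := hroot p hp
    exact ⟨by rw [hSol.uFun_eq_mul_vFun]; exact mul_eq_zero_of_right _ hzero, hzero, hlt, huniq⟩
  · rw [deriv_comp_eq_of_implicit (γ := fun x => (x, S.z₀, 0)) hf hT hT0
      ((hasDerivAt_id' _).prodMk (hasDerivAt_const _ _)) rfl hroot'
      hSol.hasDerivAt_vFun_zero_x hc hc0]
    field_simp
  · rw [deriv_comp_eq_of_implicit (γ := fun z => (S.x₀, z, 0)) hf hT hT0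
      ((hasDerivAt_const _ _).prodMk ((hasDerivAt_id' _).prodMk (hasDerivAt_const _ _))) rfl
      hroot' (hSol.hasDerivAt_vFun_zero_z hhi) hc hc0]
    field_simp
  · rw [deriv_comp_eq_of_implicit (γ := fun e => (S.x₀, S.z₀, e)) hf hT hT0
      ((hasDerivAt_const _ _).prodMk ((hasDerivAt_const _ _).prodMk (hasDerivAt_id' _))) rfl
      hroot' (hSol.hasDerivAt_vFun_zero_ε hgi hhi) hc hc0]
    field_simp

end IsSol

/-- for each `i ∈ {−,+}`, if `hⁱ ≠ 0` and `Dⁱ ≠ 0` then there is a unique `C²`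
nontrivial return-time function `Tⁱ_ε(x,z)` near `(x₀,z₀,0)` with `Tⁱ₀(x₀,z₀) = 0`, solving
`H(Yⁱ(T,x,ζ(z),z,ε), Zⁱ(T,x,ζ(z),z,ε)) = 0` as the nonzero root near `t = 0`, with
`∂ₓTⁱ = ᾱⁱ/hⁱ`, `∂_zTⁱ = −2/hⁱ`, `∂_εTⁱ = γ̄ⁱ/hⁱ` at `(x₀,z₀,0)`. -/
theorem stmt3 (S : SysData) (Xm Ym Zm Xp Yp Zp : ℝ → ℝ → ℝ → ℝ → ℝ → ℝ)
    (hSolm : IsSol S S.gm S.hm Xm Ym Zm) (hSolp : IsSol S S.gp S.hp Xp Yp Zp)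
    (hhm0 : S.hm0 ≠ 0) (hhp0 : S.hp0 ≠ 0) (hDm : S.Dm ≠ 0) (hDp : S.Dp ≠ 0) :
    ReturnTimeConcl S Ym Zm S.hm0 S.albm S.gbm ∧
    ReturnTimeConcl S Yp Zp S.hp0 S.albp S.gbp :=
  ⟨hSolm.returnTimeConcl S.smooth_gm S.smooth_hm S.foldm hhm0 hDm,
    hSolp.returnTimeConcl S.smooth_gp S.smooth_hp S.foldp hhp0 hDp⟩
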